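/- arXiv:1308.2500 — 4 statements merged into one kernel-verified Lean document; each statement's English description precedes it below -/
import Mathlib

section
/- Let M be a centrally symmetric convex body in the plane (symmetric about the origin), and let P be a largest-area parallelogram inscribed in M and P' a smallest-area parallelogram circumscribed about M. Then λ(P) ≥ (1/2)·λ(P'). -/
open MeasureTheory Set Pointwise ENNReal

noncomputable section

abbrev Plane := EuclideanSpace ℝ (Fin 2)

/-- 2-dimensional Lebesgue area of a plane set. -/
def area (S : Set Plane) : ℝ := (volume S).toReal

/-- Rotation by π/2 about the origin. -/
def rot (p : Plane) : Plane := WithLp.toLp 2 ![-(p 1), p 0]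

/-- A convex body: compact, convex, with nonempty interior. -/
def IsConvexBody {V : Type*} [NormedAddCommGroup V] [NormedSpace ℝ V] (K : Set V) : Prop :=
  IsCompact K ∧ Convex ℝ K ∧ (interior K).Nonempty

/-- The central symmetral (1/2)(K + (-K)) of K. -/
def centralSymmetral {V : Type*} [NormedAddCommGroup V] [NormedSpace ℝ V] (K : Set V) : Set V :=
  (2:ℝ)⁻¹ • (K + -K)

/-- A (possibly degenerate) parallelogram in the plane. -/
def IsParallelogram (P : Set Plane) : Prop :=
  ∃ c u v : Plane,
    P = (fun st : ℝ × ℝ => c + st.1 • u + st.2 • v) '' (Icc (-1:ℝ) 1 ×ˢ Icc (-1:ℝ) 1)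

/-! Pick `u, v ∈ M` maximizing `D = det(u, v)` over `M × M`; by symmetry `|det(x, y)| ≤ D` on
`M × M`. By Cramer's rule every `x ∈ M` then has coordinates in `[-1, 1]` with respect to `u, v`,
so `M` lies in the parallelogram `{s u + t v : |s|, |t| ≤ 1}` of area `4D`. By convexity `M`
contains the parallelogram with vertices `±u, ±v`, of area `2D`. -/

def cross (x y : Plane) : ℝ := x 0 * y 1 - x 1 * y 0

lemma cross_smul (u v x : Plane) : cross u v • x = cross x v • u + cross u x • v := by
  ext i
  fin_cases i <;>
    simp only [cross, Fin.zero_eta, Fin.mk_one, PiLp.smul_apply, PiLp.add_apply, smul_eq_mul] <;>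
    ring

def parallelogram (c u v : Plane) : Set Plane :=
  (fun st : ℝ × ℝ => c + st.1 • u + st.2 • v) '' (Icc (-1:ℝ) 1 ×ˢ Icc (-1:ℝ) 1)

lemma isParallelogram_parallelogram (c u v : Plane) : IsParallelogram (parallelogram c u v) :=
  ⟨c, u, v, rfl⟩

lemma volume_parallelogram (c u v : Plane) :
    volume (parallelogram c u v) = ENNReal.ofReal (4 * |cross u v|) := by
  let L : Plane →ₗ[ℝ] Plane := Matrix.toLpLin 2 2 !![u 0, v 0; u 1, v 1]
  have hL : ∀ y : Plane, L y = y 0 • u + y 1 • v := by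
    intro y
    ext i
    fin_cases i <;>
    simp only [L, Fin.zero_eta, Fin.mk_one, Matrix.toLpLin_apply, Matrix.cons_mulVec, dotProduct,
      Fin.sum_univ_two, Matrix.cons_val_zero, Matrix.cons_val_one, Matrix.cons_val_fin_one,
      Matrix.empty_mulVec, PiLp.add_apply, PiLp.smul_apply, smul_eq_mul] <;> ring
  let S : Set Plane := (MeasurableEquiv.toLp 2 (Fin 2 → ℝ)).symm ⁻¹' univ.pi fun _ => Icc (-1) 1
  have himage : parallelogram c u v = c +ᵥ L '' S := by
    ext x
    constructor
    · rintro ⟨⟨s, t⟩, ⟨hs, ht⟩, rfl⟩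
      refine ⟨L (WithLp.toLp 2 ![s, t]), ⟨WithLp.toLp 2 ![s, t], ?_, rfl⟩, ?_⟩
      · intro i _
        fin_cases i <;> simpa [S]
      · rw [hL]
        simp [vadd_eq_add, add_assoc]
    · rintro ⟨_, ⟨y, hy, rfl⟩, rfl⟩
      exact ⟨(y 0, y 1), ⟨hy 0 (mem_univ _), hy 1 (mem_univ _)⟩,
        by simp [hL, vadd_eq_add, add_assoc]⟩
  have hdet : LinearMap.det L = cross u v := by
    simp only [L, Matrix.toLpLin_eq_toLin, LinearMap.det_toLin, Matrix.det_fin_two_of, cross]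
    ring
  have hS : volume S = 4 := by
    rw [(EuclideanSpace.volume_preserving_symm_measurableEquiv_toLp (Fin 2)).measure_preimage
      (MeasurableSet.univ_pi fun _ => measurableSet_Icc).nullMeasurableSet, volume_pi_pi]
    simp only [Real.volume_Icc, Fin.prod_univ_two]
    rw [← ENNReal.ofReal_mul] <;> norm_num
  rw [himage, measure_vadd, Measure.addHaar_image_linearMap, hdet, hS, mul_comm,
    ENNReal.ofReal_mul (by norm_num), ENNReal.ofReal_ofNat]

lemma area_parallelogram (c u v : Plane) : area (parallelogram c u v) = 4 * |cross u v| := by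
  rw [area, volume_parallelogram, ENNReal.toReal_ofReal (by positivity)]

lemma area_parallelogram_half_add_half_sub (u v : Plane) :
    area (parallelogram 0 ((2:ℝ)⁻¹ • (u + v)) ((2:ℝ)⁻¹ • (u - v))) = 2 * |cross u v| := by
  have : cross ((2:ℝ)⁻¹ • (u + v)) ((2:ℝ)⁻¹ • (u - v)) = -(cross u v / 2) := by
    simp only [cross, PiLp.smul_apply, PiLp.add_apply, PiLp.sub_apply, smul_eq_mul]
    ring
  rw [area_parallelogram, this, abs_neg, abs_div, abs_two]
  ring

lemma Convex.parallelogram_subset {K : Set Plane} (hK : Convex ℝ K) {c u v : Plane}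
    (hpp : c + u + v ∈ K) (hpm : c + u - v ∈ K) (hmp : c - u + v ∈ K) (hmm : c - u - v ∈ K) :
    parallelogram c u v ⊆ K := by
  rintro _ ⟨⟨s, t⟩, ⟨hs, ht⟩, rfl⟩
  have mix : ∀ {x y : Plane}, x ∈ K → y ∈ K → ∀ r ∈ Icc (-1:ℝ) 1,
      ((1 + r) / 2) • x + ((1 - r) / 2) • y ∈ K := fun hx hy r hr =>
    hK hx hy (by linarith [hr.1]) (by linarith [hr.2]) (by ring)
  convert mix (mix hpp hpm t ht) (mix hmp hmm t ht) s hs using 1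
  module

lemma Convex.parallelogram_half_add_half_sub_subset {K : Set Plane} (hK : Convex ℝ K)
    (hneg : ∀ x ∈ K, -x ∈ K) {u v : Plane} (hu : u ∈ K) (hv : v ∈ K) :
    parallelogram 0 ((2:ℝ)⁻¹ • (u + v)) ((2:ℝ)⁻¹ • (u - v)) ⊆ K :=
  hK.parallelogram_subset (by convert hu using 1; module) (by convert hv using 1; module)
    (by convert hneg v hv using 1; module) (by convert hneg u hu using 1; module)

lemma mem_parallelogram_zero_of_abs_cross_le {u v x : Plane} (hD : 0 < cross u v)
    (hxv : |cross x v| ≤ cross u v) (hux : |cross u x| ≤ cross u v) :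
    x ∈ parallelogram 0 u v := by
  refine ⟨(cross x v / cross u v, cross u x / cross u v), ⟨?_, ?_⟩, ?_⟩
  · rwa [mem_Icc, ← abs_le, abs_div, abs_of_pos hD, div_le_one hD]
  · rwa [mem_Icc, ← abs_le, abs_div, abs_of_pos hD, div_le_one hD]
  · dsimp only
    rw [zero_add, div_eq_inv_mul, div_eq_inv_mul, mul_smul, mul_smul, ← smul_add, ← cross_smul,
      inv_smul_smul₀ hD.ne']

lemma exists_cross_ne_zero {S : Set Plane} (hS : (interior S).Nonempty) :
    ∃ x ∈ S, ∃ y ∈ S, cross x y ≠ 0 := by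
  obtain ⟨x, hx⟩ := hS
  obtain ⟨ε, hε, hball⟩ := Metric.mem_nhds_iff.1 (mem_interior_iff_mem_nhds.1 hx)
  set e : Fin 2 → Plane := fun i => EuclideanSpace.single i (ε / 2)
  have he : ∀ i, x + e i ∈ S := fun i => hball <| by
    rw [Metric.mem_ball, dist_self_add_left, PiLp.norm_single, Real.norm_of_nonneg]
    all_goals linarith
  by_contra! h
  -- bilinearity and `cross x x = 0` reduce the left side to `cross (e 0) (e 1)`
  have key : cross (x + e 0) (x + e 1) - cross x (x + e 1) - cross (x + e 0) x = (ε / 2) ^ 2 := by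
    simp only [cross, e, PiLp.add_apply, PiLp.single_apply, one_ne_zero, zero_ne_one, ↓reduceIte]
    ring
  have hxS := interior_subset hx
  rw [h _ (he 0) _ (he 1), h _ hxS _ (he 1), h _ (he 0) _ hxS] at key
  have : 0 < (ε / 2) ^ 2 := by positivity
  linarith

lemma exists_abs_cross_le {M : Set Plane} (hM : IsCompact M) (hne : M.Nonempty)
    (hneg : ∀ x ∈ M, -x ∈ M) : ∃ u ∈ M, ∃ v ∈ M, ∀ x ∈ M, ∀ y ∈ M, |cross x y| ≤ cross u v := by
  obtain ⟨⟨u, v⟩, ⟨hu, hv⟩, hmax⟩ := (hM.prod hM).exists_isMaxOn (hne.prod hne)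
    (by unfold cross; fun_prop : ContinuousOn (fun p : Plane × Plane => cross p.1 p.2) (M ×ˢ M))
  refine ⟨u, hu, v, hv, fun x hx y hy => abs_le.2 ⟨?_, hmax (mk_mem_prod hx hy)⟩⟩
  have : cross (-x) y ≤ cross u v := hmax (mk_mem_prod (hneg x hx) hy)
  simp only [cross, PiLp.neg_apply] at this ⊢
  linarith

theorem inscribed_ge_half_circumscribed_general (M P P' : Set Plane) (hM : IsConvexBody M)
    (hsym : M = -M)
    (hPmax : ∀ Q : Set Plane, IsParallelogram Q → Q ⊆ M → area Q ≤ area P)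
    (hP'min : ∀ Q : Set Plane, IsParallelogram Q → M ⊆ Q → area P' ≤ area Q) :
    area P ≥ (1/2) * area P' := by
  obtain ⟨hcomp, hconv, hint⟩ := hM
  have hneg : ∀ x ∈ M, -x ∈ M := fun x hx => by rw [hsym]; exact neg_mem_neg.2 hx
  obtain ⟨u, hu, v, hv, hmax⟩ := exists_abs_cross_le hcomp (hint.mono interior_subset) hneg
  obtain ⟨a, ha, b, hb, hab⟩ := exists_cross_ne_zero hint
  have hD : 0 < cross u v := (abs_pos.2 hab).trans_le (hmax a ha b hb)
  have hinscribed := hPmax _ (isParallelogram_parallelogram _ _ _)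
    (hconv.parallelogram_half_add_half_sub_subset hneg hu hv)
  have hcircumscribed := hP'min _ (isParallelogram_parallelogram 0 u v)
    fun x hx => mem_parallelogram_zero_of_abs_cross_le hD (hmax x hx v hv) (hmax u hu x hx)
  rw [area_parallelogram_half_add_half_sub] at hinscribed
  rw [area_parallelogram] at hcircumscribed
  linarith

/-- For an o-symmetric plane convex body, a largest inscribed parallelogram has at least
half the area of a smallest circumscribed parallelogram. -/
theorem inscribed_ge_half_circumscribed (M P P' : Set Plane) (hM : IsConvexBody M)
    (hsym : M = -M)
    (hP : IsParallelogram P) (hPM : P ⊆ M)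
    (hPmax : ∀ Q : Set Plane, IsParallelogram Q → Q ⊆ M → area Q ≤ area P)
    (hP' : IsParallelogram P') (hMP' : M ⊆ P')
    (hP'min : ∀ Q : Set Plane, IsParallelogram Q → M ⊆ Q → area P' ≤ area Q) :
    area P ≥ (1/2) * area P' :=
  inscribed_ge_half_circumscribed_general M P P' hM hsym hPmax hP'min
end
end

section
/- Let M be a centrally symmetric convex body in the plane (M = -M). Then the maximum over x ∈ ℝ² with M ∩ (x + M) ≠ ∅ of λ(conv(M ∪ (x + M))) equals λ(M) + 2·λ(P), where P is a largest-area parallelogram inscribed in M; equivalently, the maximal convex-hull area of two intersecting translates divided by λ(M) equals 1 + 2λ(P)/λ(M). -/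
open MeasureTheory Set Pointwise ENNReal

noncomputable section

/-
The convex hull of M ∪ (x + M) is the Minkowski sum M + [0, x]. A shear of determinant -1 maps
the segment [0, x] to a vertical unit segment and the functional m ↦ det(x, m) = ⟪rot x, m⟫ to the
first coordinate, so Cavalieri's principle gives λ(N + [0, x]) = λ(N) + λ(⟪rot x, N⟫) for every
compact convex N. For symmetric M the second term is 2 sup_{m ∈ M} det(x, m).

The translates intersect iff a = x/2 ∈ M, and then for every m ∈ M the points ±a, ±m span an
inscribed parallelogram of area 2|det(a, m)|, so sup_{m ∈ M} det(x, m) ≤ λ(P). Conversely, if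
P = c + [-1, 1]u + [-1, 1]v ⊆ M then symmetry and convexity put u ± v in M, and x = 2(u + v)
gives det(x, u - v) = -4 det(u, v), of absolute value λ(P).
-/

open scoped InnerProductSpace

section Convex

variable {E : Type*} [AddCommGroup E] [Module ℝ E] {s : Set E}

theorem convexHull_union_vadd_eq_add_segment (hs : Convex ℝ s) (x : E) :
    convexHull ℝ (s ∪ (x +ᵥ s)) = s + segment ℝ 0 x := by
  refine le_antisymm (convexHull_min ?_ (hs.add (convex_segment 0 x))) ?_
  · rintro _ (hm | ⟨m, hm, rfl⟩)
    · exact ⟨_, hm, 0, left_mem_segment ℝ 0 x, add_zero _⟩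
    · exact ⟨m, hm, x, right_mem_segment ℝ 0 x, add_comm m x⟩
  · rintro _ ⟨m, hm, _, ⟨a, b, ha, hb, hab, rfl⟩, rfl⟩
    have hm' : m ∈ convexHull ℝ (s ∪ (x +ᵥ s)) := subset_convexHull ℝ _ (Or.inl hm)
    have hx : x + m ∈ convexHull ℝ (s ∪ (x +ᵥ s)) :=
      subset_convexHull ℝ _ (Or.inr ⟨m, hm, rfl⟩)
    convert convex_convexHull ℝ _ hm' hx ha hb hab using 1
    obtain rfl : a = 1 - b := by linarith
    dsimp only
    module

theorem Convex.add_smul_mem_of_mem_Icc (hs : Convex ℝ s) {p q : E} (hadd : p + q ∈ s)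
    (hsub : p - q ∈ s) {t : ℝ} (ht : t ∈ Icc (-1) 1) : p + t • q ∈ s := by
  convert hs hadd hsub (by linarith [ht.1] : 0 ≤ (1 + t) / 2)
    (by linarith [ht.2] : 0 ≤ (1 - t) / 2) (by ring) using 1
  module

theorem Convex.half_smul_sub_mem (hs : Convex ℝ s) (hsym : -s = s) {p q : E} (hp : p ∈ s)
    (hq : q ∈ s) : (2 : ℝ)⁻¹ • (p - q) ∈ s := by
  convert hs hp (hsym ▸ neg_mem_neg.mpr hq : -q ∈ s) (by norm_num : (0 : ℝ) ≤ 2⁻¹)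
    (by norm_num : (0 : ℝ) ≤ 2⁻¹) (by norm_num) using 1
  module

theorem inter_vadd_nonempty_iff (hs : Convex ℝ s) (hsym : -s = s) (x : E) :
    (s ∩ (x +ᵥ s)).Nonempty ↔ (2 : ℝ)⁻¹ • x ∈ s := by
  constructor
  · rintro ⟨_, hz, b, hb, rfl⟩
    convert hs.half_smul_sub_mem hsym hz hb using 2
    simp only [vadd_eq_add, add_sub_cancel_right]
  · intro hx
    refine ⟨_, hx, -((2 : ℝ)⁻¹ • x), hsym ▸ neg_mem_neg.mpr hx, ?_⟩
    simp only [vadd_eq_add]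
    module

end Convex

theorem Real.volume_add_Icc_zero_one {A : Set ℝ} (hA : IsCompact A) (hconv : Convex ℝ A)
    (hne : A.Nonempty) : volume (A + Icc 0 1) = volume A + 1 := by
  have hle : sInf A ≤ sSup A := csInf_le_csSup hne hA.bddBelow hA.bddAbove
  rw [eq_Icc_of_connected_compact (hconv.isConnected hne) hA, Icc_add_Icc hle zero_le_one,
    Real.volume_Icc, Real.volume_Icc, add_zero, add_sub_right_comm,
    ENNReal.ofReal_add (sub_nonneg.mpr hle) zero_le_one, ENNReal.ofReal_one]

theorem Real.toReal_volume_eq_two_mul_sSup {S : Set ℝ} (hS : IsCompact S) (hconv : Convex ℝ S)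
    (hne : S.Nonempty) (hsym : -S = S) : (volume S).toReal = 2 * sSup S := by
  have hinf : sInf S = -sSup S := by rw [← Real.sInf_neg, hsym]
  have hle : sInf S ≤ sSup S := csInf_le_csSup hne hS.bddBelow hS.bddAbove
  conv_lhs => rw [eq_Icc_of_connected_compact (hconv.isConnected hne) hS]
  rw [Real.volume_Icc, ENNReal.toReal_ofReal (sub_nonneg.mpr hle), hinf]
  ring

theorem abs_le_csSup_of_neg_eq {S : Set ℝ} (hS : BddAbove S) (hsym : -S = S) {s : ℝ}
    (hs : s ∈ S) : |s| ≤ sSup S :=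
  abs_le'.mpr ⟨le_csSup hS hs, le_csSup hS (hsym ▸ neg_mem_neg.mpr hs)⟩

theorem preimage_mk_add_singleton_zero_prod {α β : Type*} [AddZeroClass α] [Add β]
    (K : Set (α × β)) (B : Set β) (y : α) :
    Prod.mk y ⁻¹' (K + {0} ×ˢ B) = Prod.mk y ⁻¹' K + B := by
  ext t
  constructor
  · rintro ⟨⟨a, s⟩, ha, ⟨b, r⟩, ⟨hb : b = 0, hr⟩, hsum⟩
    obtain ⟨rfl, rfl⟩ := Prod.ext_iff.mp hsum
    exact ⟨s, by simpa [hb] using ha, r, hr, rfl⟩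
  · rintro ⟨s, hs, r, hr, rfl⟩
    exact ⟨(y, s), hs, (0, r), ⟨rfl, hr⟩, by simp⟩

theorem volume_preimage_mk_add_singleton_zero_prod_Icc {K : Set (ℝ × ℝ)} (hK : IsCompact K)
    (hconv : Convex ℝ K) (y : ℝ) :
    volume (Prod.mk y ⁻¹' (K + {0} ×ˢ Icc 0 1)) =
      volume (Prod.mk y ⁻¹' K) + (Prod.fst '' K).indicator 1 y := by
  have hslice : Prod.mk y ⁻¹' K = Prod.snd '' (K ∩ Prod.fst ⁻¹' {y}) := by
    ext t
    exact ⟨fun ht => ⟨(y, t), ⟨ht, rfl⟩, rfl⟩, by rintro ⟨⟨_, t⟩, ⟨h, rfl⟩, rfl⟩; exact h⟩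
  have hcompact : IsCompact (Prod.mk y ⁻¹' K) := hslice ▸
    (hK.inter_right (isClosed_singleton.preimage continuous_fst)).image continuous_snd
  have hconvex : Convex ℝ (Prod.mk y ⁻¹' K) := hslice ▸
    (hconv.inter ((convex_singleton y).linear_preimage (LinearMap.fst ℝ ℝ ℝ))).linear_image
      (LinearMap.snd ℝ ℝ ℝ)
  rw [preimage_mk_add_singleton_zero_prod]
  by_cases hy : y ∈ Prod.fst '' K
  · obtain ⟨⟨_, t⟩, ht, rfl⟩ := hy
    rw [Real.volume_add_Icc_zero_one hcompact hconvex ⟨t, ht⟩,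
      indicator_of_mem (mem_image_of_mem _ ht), Pi.one_apply]
  · have hempty : Prod.mk y ⁻¹' K = ∅ :=
      eq_empty_of_forall_notMem fun t ht => hy ⟨(y, t), ht, rfl⟩
    rw [hempty, empty_add, indicator_of_notMem hy, measure_empty, add_zero]

theorem volume_add_singleton_zero_prod_Icc {K : Set (ℝ × ℝ)} (hK : IsCompact K)
    (hconv : Convex ℝ K) :
    volume (K + {0} ×ˢ Icc 0 1) = volume K + volume (Prod.fst '' K) := by
  have hfst : MeasurableSet (Prod.fst '' K) := (hK.image continuous_fst).measurableSet
  rw [Measure.volume_eq_prod, Measure.prod_apply (hK.add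
      (isCompact_singleton.prod isCompact_Icc)).measurableSet,
    Measure.prod_apply hK.measurableSet, ← lintegral_indicator_one hfst,
    ← lintegral_add_right _ (measurable_one.indicator hfst)]
  exact lintegral_congr (volume_preimage_mk_add_singleton_zero_prod_Icc hK hconv)

namespace Plane

def coordEquiv : Plane ≃L[ℝ] ℝ × ℝ :=
  (EuclideanSpace.equiv (Fin 2) ℝ).trans (ContinuousLinearEquiv.finTwoArrow ℝ ℝ)

@[simp]
theorem coordEquiv_apply (p : Plane) : coordEquiv p = (p 0, p 1) := rfl

theorem measurePreserving_coordEquiv : MeasurePreserving coordEquiv :=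
  (volume_preserving_finTwoArrow ℝ).comp (PiLp.volume_preserving_ofLp (Fin 2))

theorem volume_image_coordEquiv (S : Set Plane) : volume (coordEquiv '' S) = volume S := by
  rw [← measurePreserving_coordEquiv.measure_preimage_emb
    coordEquiv.toHomeomorph.measurableEmbedding, coordEquiv.injective.preimage_image]

theorem volume_add_segment_single_one {K : Set Plane} (hK : IsCompact K) (hconv : Convex ℝ K) :
    volume (K + segment ℝ 0 (EuclideanSpace.single 1 1)) =
      volume K + volume ((fun p : Plane => p 0) '' K) := by
  have hseg : coordEquiv '' segment ℝ 0 (EuclideanSpace.single 1 1) = {0} ×ˢ Icc 0 1 := by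
    rw [singleton_prod, ← segment_eq_Icc zero_le_one, Prod.image_mk_segment_right]
    simpa using image_segment ℝ (coordEquiv : Plane →ₗ[ℝ] ℝ × ℝ).toAffineMap 0
      (EuclideanSpace.single 1 1)
  have hfst : Prod.fst '' (coordEquiv '' K) = (fun p : Plane => p 0) '' K := by
    rw [image_image]
    rfl
  rw [← volume_image_coordEquiv, image_add coordEquiv, hseg,
    volume_add_singleton_zero_prod_Icc (hK.image coordEquiv.continuous)
      (hconv.linear_image coordEquiv.toLinearMap), volume_image_coordEquiv, hfst]

theorem inner_rot (x y : Plane) : ⟪rot x, y⟫_ℝ = x 0 * y 1 - x 1 * y 0 := by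
  simp [rot, PiLp.inner_apply, Fin.sum_univ_two]
  ring

theorem inner_rot_self (x : Plane) : ⟪rot x, x⟫_ℝ = 0 := by
  rw [inner_rot]
  ring

theorem inner_rot_comm (x y : Plane) : ⟪rot x, y⟫_ℝ = -⟪rot y, x⟫_ℝ := by
  rw [inner_rot, inner_rot]
  ring

theorem inner_rot_rot (x y : Plane) : ⟪rot x, rot y⟫_ℝ = ⟪x, y⟫_ℝ := by
  simp [rot, PiLp.inner_apply, Fin.sum_univ_two]
  ring

theorem exists_inner_rot_eq_one {x : Plane} (hx : x ≠ 0) : ∃ w, ⟪rot x, w⟫_ℝ = 1 := by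
  have hn : ⟪rot x, rot x⟫_ℝ ≠ 0 := by
    rw [inner_rot_rot]
    exact inner_self_ne_zero.mpr hx
  exact ⟨(⟪rot x, rot x⟫_ℝ)⁻¹ • rot x, by rw [real_inner_smul_right, inv_mul_cancel₀ hn]⟩

def ofColumns (u v : Plane) : Plane →ₗ[ℝ] Plane where
  toFun p := p 0 • u + p 1 • v
  map_add' p q := by simp only [PiLp.add_apply, add_smul]; abel
  map_smul' r p := by
    simp only [PiLp.smul_apply, smul_eq_mul, mul_smul, smul_add, RingHom.id_apply]

theorem ofColumns_apply (u v p : Plane) : ofColumns u v p = p 0 • u + p 1 • v := rfl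

theorem det_ofColumns (u v : Plane) : LinearMap.det (ofColumns u v) = ⟪rot u, v⟫_ℝ := by
  rw [← LinearMap.det_toMatrix (EuclideanSpace.basisFun (Fin 2) ℝ).toBasis, Matrix.det_fin_two,
    inner_rot]
  simp [LinearMap.toMatrix_apply, ofColumns_apply]
  ring

theorem volume_add_segment {K : Set Plane} (hK : IsCompact K) (hconv : Convex ℝ K) (x : Plane) :
    volume (K + segment ℝ 0 x) = volume K + volume (innerSL ℝ (rot x) '' K) := by
  rcases eq_or_ne x 0 with rfl | hx
  · have hnull : volume (innerSL ℝ (rot 0) '' K) = 0 := by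
      refine measure_mono_null (image_subset_iff.mpr fun m _ => ?_) (measure_singleton 0)
      simp [inner_rot]
    simp only [segment_same, add_singleton, add_zero, image_id', hnull]
  obtain ⟨w, hw⟩ := exists_inner_rot_eq_one hx
  set L := ofColumns w x
  have hdet : LinearMap.det L = -1 := by rw [det_ofColumns, inner_rot_comm, hw]
  have hvol : ∀ S, volume (L '' S) = volume S := fun S => by
    rw [Measure.addHaar_image_linearMap, hdet, abs_neg, abs_one, ENNReal.ofReal_one, one_mul]
  have hcoord : ∀ p, ⟪rot x, L p⟫_ℝ = p 0 := fun p => by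
    rw [ofColumns_apply, inner_add_right, real_inner_smul_right, real_inner_smul_right, hw,
      inner_rot_self, mul_one, mul_zero, add_zero]
  let E := LinearMap.equivOfIsUnitDet (hdet ▸ isUnit_one.neg : IsUnit (LinearMap.det L))
  have hE : ⇑E = ⇑L := funext (LinearMap.equivOfIsUnitDet_apply _)
  set K' := E.symm '' K
  have hKL : K = L '' K' := by
    rw [← hE]
    exact (E.toEquiv.image_symm_image K).symm
  have hseg : L '' segment ℝ 0 (EuclideanSpace.single 1 1) = segment ℝ 0 x := by
    simpa [L, ofColumns_apply] using image_segment ℝ L.toAffineMap 0 (EuclideanSpace.single 1 1)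
  have hfst : innerSL ℝ (rot x) '' K = (fun p : Plane => p 0) '' K' := by
    rw [hKL, image_image]
    exact image_congr fun p _ => hcoord p
  rw [hfst, hKL, ← hseg, ← image_add, hvol, hvol]
  exact volume_add_segment_single_one (hK.image E.symm.toLinearMap.continuous_of_finiteDimensional)
    (hconv.linear_image E.symm.toLinearMap)

def parallelogram (c u v : Plane) : Set Plane :=
  (fun st : ℝ × ℝ => c + st.1 • u + st.2 • v) '' (Icc (-1 : ℝ) 1 ×ˢ Icc (-1 : ℝ) 1)

theorem isParallelogram_iff {P : Set Plane} :
    IsParallelogram P ↔ ∃ c u v, P = parallelogram c u v :=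
  Iff.rfl

theorem parallelogram_eq_vadd_image (c u v : Plane) :
    parallelogram c u v =
      c +ᵥ ofColumns u v '' (coordEquiv.symm '' (Icc (-1) 1 ×ˢ Icc (-1) 1)) := by
  rw [← image_vadd, image_image, image_image, parallelogram]
  refine image_congr fun st _ => ?_
  rw [ofColumns_apply, add_assoc]
  rfl

theorem area_parallelogram (c u v : Plane) :
    area (parallelogram c u v) = 4 * |⟪rot u, v⟫_ℝ| := by
  have hsquare : volume (coordEquiv.symm '' (Icc (-1 : ℝ) 1 ×ˢ Icc (-1 : ℝ) 1)) = 4 := by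
    rw [← volume_image_coordEquiv, coordEquiv.image_symm_image, Measure.volume_eq_prod,
      Measure.prod_prod, Real.volume_Icc]
    norm_num
  rw [area, parallelogram_eq_vadd_image, measure_vadd, Measure.addHaar_image_linearMap, hsquare,
    det_ofColumns, ENNReal.toReal_mul, ENNReal.toReal_ofReal (abs_nonneg _)]
  norm_num [mul_comm]

theorem parallelogram_subset {M : Set Plane} (hconv : Convex ℝ M) {c u v : Plane}
    (h₁ : c + u + v ∈ M) (h₂ : c + u - v ∈ M) (h₃ : c - u + v ∈ M) (h₄ : c - u - v ∈ M) :
    parallelogram c u v ⊆ M := by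
  rintro _ ⟨⟨s, t⟩, ⟨hs, ht⟩, rfl⟩
  have hplus : c + t • v + u ∈ M := by
    convert hconv.add_smul_mem_of_mem_Icc h₁ h₂ ht using 1
    abel
  have hminus : c + t • v - u ∈ M := by
    convert hconv.add_smul_mem_of_mem_Icc h₃ h₄ ht using 1
    abel
  convert hconv.add_smul_mem_of_mem_Icc hplus hminus hs using 1
  dsimp only
  abel

section SymmetricBody

variable {M : Set Plane} (hconv : Convex ℝ M) (hsym : -M = M)
include hconv hsym

theorem area_convexHull_union_vadd (hc : IsCompact M) (hne : M.Nonempty) (x : Plane) :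
    area (convexHull ℝ (M ∪ (x +ᵥ M))) = area M + 2 * sSup (innerSL ℝ (rot x) '' M) := by
  have hcompact : IsCompact (innerSL ℝ (rot x) '' M) := hc.image (innerSL ℝ (rot x)).continuous
  rw [area, convexHull_union_vadd_eq_add_segment hconv, volume_add_segment hc hconv,
    ENNReal.toReal_add hc.measure_lt_top.ne hcompact.measure_lt_top.ne,
    Real.toReal_volume_eq_two_mul_sSup hcompact
      (hconv.linear_image (innerSL ℝ (rot x)).toLinearMap) (hne.image _)
      (by rw [← image_neg, hsym]), area]

theorem two_mul_abs_inner_rot_le {P : Set Plane}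
    (hPmax : ∀ Q : Set Plane, IsParallelogram Q → Q ⊆ M → area Q ≤ area P)
    {a m : Plane} (ha : a ∈ M) (hm : m ∈ M) : 2 * |⟪rot a, m⟫_ℝ| ≤ area P := by
  have hneg : ∀ y ∈ M, -y ∈ M := fun y hy => hsym ▸ neg_mem_neg.mpr hy
  have hQ := hPmax _ ⟨0, _, _, rfl⟩ (parallelogram_subset hconv
    (c := 0) (u := (2 : ℝ)⁻¹ • (a + m)) (v := (2 : ℝ)⁻¹ • (a - m))
    (by convert ha using 1; module) (by convert hm using 1; module)
    (by convert hneg m hm using 1; module) (by convert hneg a ha using 1; module))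
  have hcross : ⟪rot ((2 : ℝ)⁻¹ • (a + m)), (2 : ℝ)⁻¹ • (a - m)⟫_ℝ = -(2⁻¹ * ⟪rot a, m⟫_ℝ) := by
    simp only [inner_rot, PiLp.smul_apply, PiLp.add_apply, PiLp.sub_apply, smul_eq_mul]
    ring
  rw [← parallelogram, area_parallelogram, hcross, abs_neg, abs_mul,
    abs_of_pos (by norm_num : (0 : ℝ) < 2⁻¹)] at hQ
  linarith

theorem sSup_inner_rot_le {P : Set Plane}
    (hPmax : ∀ Q : Set Plane, IsParallelogram Q → Q ⊆ M → area Q ≤ area P)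
    {x : Plane} (hx : (2 : ℝ)⁻¹ • x ∈ M) : sSup (innerSL ℝ (rot x) '' M) ≤ area P := by
  refine csSup_le (Set.Nonempty.image _ ⟨_, hx⟩) ?_
  rintro _ ⟨m, hm, rfl⟩
  have hhalf : ⟪rot x, m⟫_ℝ = 2 * ⟪rot ((2 : ℝ)⁻¹ • x), m⟫_ℝ := by
    simp only [inner_rot, PiLp.smul_apply, smul_eq_mul]
    ring
  calc ⟪rot x, m⟫_ℝ ≤ |⟪rot x, m⟫_ℝ| := le_abs_self _
    _ = 2 * |⟪rot ((2 : ℝ)⁻¹ • x), m⟫_ℝ| := by rw [hhalf, abs_mul, abs_two]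
    _ ≤ area P := two_mul_abs_inner_rot_le hconv hsym hPmax hx hm

theorem add_mem_and_sub_mem_of_parallelogram_subset {c u v : Plane}
    (hPM : parallelogram c u v ⊆ M) : u + v ∈ M ∧ u - v ∈ M := by
  have hcorner : ∀ s t : ℝ, s ∈ Icc (-1 : ℝ) 1 → t ∈ Icc (-1 : ℝ) 1 → c + s • u + t • v ∈ M :=
    fun s t hs ht => hPM ⟨(s, t), ⟨hs, ht⟩, rfl⟩
  have h1 : (1 : ℝ) ∈ Icc (-1 : ℝ) 1 := by norm_num
  have hm1 : (-1 : ℝ) ∈ Icc (-1 : ℝ) 1 := by norm_num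
  constructor
  · convert hconv.half_smul_sub_mem hsym (hcorner 1 1 h1 h1) (hcorner (-1) (-1) hm1 hm1) using 1
    module
  · convert hconv.half_smul_sub_mem hsym (hcorner 1 (-1) h1 hm1) (hcorner (-1) 1 hm1 h1) using 1
    module

theorem area_parallelogram_le_sSup_inner_rot (hc : IsCompact M) {c u v : Plane}
    (hPM : parallelogram c u v ⊆ M) :
    area (parallelogram c u v) ≤ sSup (innerSL ℝ (rot ((2 : ℝ) • (u + v))) '' M) := by
  have hval : ⟪rot ((2 : ℝ) • (u + v)), u - v⟫_ℝ = -(4 * ⟪rot u, v⟫_ℝ) := by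
    simp only [inner_rot, PiLp.smul_apply, PiLp.add_apply, PiLp.sub_apply, smul_eq_mul]
    ring
  have hle := abs_le_csSup_of_neg_eq (hc.image (innerSL ℝ _).continuous).bddAbove
    (by rw [← image_neg, hsym]) (mem_image_of_mem (innerSL ℝ (rot ((2 : ℝ) • (u + v))))
      (add_mem_and_sub_mem_of_parallelogram_subset hconv hsym hPM).2)
  rw [area_parallelogram]
  rwa [innerSL_apply_apply, hval, abs_neg, abs_mul, abs_of_pos four_pos] at hle

end SymmetricBody

end Plane

theorem IsConvexBody.area_pos {K : Set Plane} (hK : IsConvexBody K) : 0 < area K :=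
  ENNReal.toReal_pos (Measure.measure_pos_of_nonempty_interior _ hK.2.2).ne'
    hK.1.measure_lt_top.ne

open Plane

/-- For an o-symmetric plane convex body M, the maximal area of the convex hull of two
intersecting translates of M equals λ(M) + 2λ(P), where P is a largest-area inscribed
parallelogram; equivalently, the ratio to λ(M) equals 1 + 2λ(P)/λ(M). -/
theorem max_hull_symmetric (M P : Set Plane) (hM : IsConvexBody M) (hsym : M = -M)
    (hP : IsParallelogram P) (hPM : P ⊆ M)
    (hPmax : ∀ Q : Set Plane, IsParallelogram Q → Q ⊆ M → area Q ≤ area P) :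
    sSup {A : ℝ | ∃ x : Plane, (M ∩ (x +ᵥ M)).Nonempty ∧
        A = area (convexHull ℝ (M ∪ (x +ᵥ M)))} = area M + 2 * area P ∧
      sSup {A : ℝ | ∃ x : Plane, (M ∩ (x +ᵥ M)).Nonempty ∧
        A = area (convexHull ℝ (M ∪ (x +ᵥ M)))} / area M = 1 + 2 * area P / area M := by
  have hpos := hM.area_pos
  obtain ⟨hc, hconv, hint⟩ := hM
  have hne : M.Nonempty := hint.mono interior_subset
  have hmax : IsGreatest {A : ℝ | ∃ x : Plane, (M ∩ (x +ᵥ M)).Nonempty ∧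
      A = area (convexHull ℝ (M ∪ (x +ᵥ M)))} (area M + 2 * area P) := by
    obtain ⟨c, u, v, rfl⟩ := isParallelogram_iff.mp hP
    have hx₀ : (2 : ℝ)⁻¹ • ((2 : ℝ) • (u + v)) ∈ M := by
      rw [inv_smul_smul₀ two_ne_zero]
      exact (add_mem_and_sub_mem_of_parallelogram_subset hconv hsym.symm hPM).1
    refine ⟨⟨(2 : ℝ) • (u + v), (inter_vadd_nonempty_iff hconv hsym.symm _).mpr hx₀, ?_⟩, ?_⟩
    · rw [area_convexHull_union_vadd hconv hsym.symm hc hne, le_antisymm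
        (sSup_inner_rot_le hconv hsym.symm hPmax hx₀)
        (area_parallelogram_le_sSup_inner_rot hconv hsym.symm hc hPM)]
    · rintro _ ⟨x, hx, rfl⟩
      rw [area_convexHull_union_vadd hconv hsym.symm hc hne]
      linarith [sSup_inner_rot_le hconv hsym.symm hPmax
        ((inter_vadd_nonempty_iff hconv hsym.symm x).mp hx)]
  rw [hmax.csSup_eq, add_div, div_self hpos.ne']
  exact ⟨rfl, rfl⟩
end
end

section
/- Let K be a convex body in ℝⁿ and let c_tr(K) = (1/λ(K)) · max{λ(conv(K ∪ (x+K))) : x ∈ ℝⁿ, K ∩ (x+K) ≠ ∅}. Then c_tr(K) ≤ 1 + n. -/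
open MeasureTheory Set Pointwise ENNReal

noncomputable section

/-- c_tr(K): the maximal volume of the convex hull of two intersecting translates of K,
divided by the volume of K. -/
def ctr (n : ℕ) (K : Set (EuclideanSpace ℝ (Fin n))) : ℝ :=
  sSup {A : ℝ | ∃ x : EuclideanSpace ℝ (Fin n), (K ∩ (x +ᵥ K)).Nonempty ∧
      A = (volume (convexHull ℝ (K ∪ (x +ᵥ K)))).toReal} / (volume K).toReal

open Filter Topology

/-! Let `S t = [0, t] • x + K` be the set swept by `K` moving along `x`. If `K ∩ (x + K) ≠ ∅` then
`x = a - b` with `a, b ∈ K`, and `conv (K ∪ (x + K)) ⊆ S 1`. By convexity, for `s, t ≥ 0` the set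
`S (s + t)` is the union of `S s` and `s • x + S t`, which meet exactly in `s • x + K`; hence
`t ↦ λ (S t)` is affine, and `λ (S 1) = λ K + m (λ (S (1/m)) - λ K)`. On the other hand
`S t ⊆ -t • b + (1 + t) • K`, so `λ (S t) ≤ (1 + t) ^ n λ K`, and letting `m → ∞` bounds the slope
by the derivative `n λ K` of `(1 + t) ^ n λ K` at `t = 0`. -/

section Sweep

variable {E : Type*} [AddCommGroup E] [Module ℝ E]

def sweep (K : Set E) (x : E) (t : ℝ) : Set E := (· • x) '' Icc 0 t + K

variable {K : Set E} {x : E} {s t : ℝ}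

lemma mem_sweep {p : E} : p ∈ sweep K x t ↔ ∃ u ∈ Icc 0 t, ∃ k ∈ K, u • x + k = p := by
  simp [sweep, Set.mem_add]

lemma sweep_zero : sweep K x 0 = K := by
  simp [sweep]

lemma vadd_subset_sweep (hs : 0 ≤ s) (hst : s ≤ t) : s • x +ᵥ K ⊆ sweep K x t := by
  rintro _ ⟨k, hk, rfl⟩
  exact mem_sweep.2 ⟨s, ⟨hs, hst⟩, k, hk, rfl⟩

lemma convex_sweep (hK : Convex ℝ K) : Convex ℝ (sweep K x t) :=
  ((convex_Icc 0 t).linear_image (LinearMap.toSpanSingleton ℝ E x)).add hK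

lemma sweep_add (hs : 0 ≤ s) (ht : 0 ≤ t) :
    sweep K x (s + t) = sweep K x s ∪ (s • x +ᵥ sweep K x t) := by
  ext p
  simp only [mem_union, mem_vadd_set, mem_sweep, mem_Icc]
  constructor
  · rintro ⟨u, ⟨hu0, hu⟩, k, hk, rfl⟩
    rcases le_or_gt u s with h | h
    · exact Or.inl ⟨u, ⟨hu0, h⟩, k, hk, rfl⟩
    · refine Or.inr ⟨_, ⟨u - s, ⟨by linarith, by linarith⟩, k, hk, rfl⟩, ?_⟩
      rw [vadd_eq_add, ← add_assoc, ← add_smul, add_sub_cancel]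
  · rintro (⟨u, ⟨hu0, hu⟩, k, hk, rfl⟩ | ⟨_, ⟨u, ⟨hu0, hu⟩, k, hk, rfl⟩, rfl⟩)
    · exact ⟨u, ⟨hu0, by linarith⟩, k, hk, rfl⟩
    · refine ⟨s + u, ⟨by linarith, by linarith⟩, k, hk, ?_⟩
      rw [vadd_eq_add, add_smul, add_assoc]

lemma Convex.add_smul_mem_of_mem_Icc_s8 (hK : Convex ℝ K) {k v : E} {u D : ℝ} (hk : k ∈ K)
    (hkD : k + D • v ∈ K) (hu : u ∈ Icc 0 D) : k + u • v ∈ K := by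
  have hline : ∀ u : ℝ, AffineMap.lineMap k (k + v) u = k + u • v := fun u => by
    rw [AffineMap.lineMap_apply_module', add_sub_cancel_left, add_comm]
  have hconv := convex_iff_ordConnected.1 (hK.affine_preimage (AffineMap.lineMap k (k + v)))
  simpa only [mem_preimage, hline, zero_smul, add_zero] using
    hconv.out (x := 0) (y := D) (by simpa [hline] using hk) (by simpa [hline] using hkD) hu

lemma sweep_inter_vadd_sweep (hK : Convex ℝ K) (hs : 0 ≤ s) (ht : 0 ≤ t) :
    sweep K x s ∩ (s • x +ᵥ sweep K x t) = s • x +ᵥ K := by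
  refine subset_antisymm ?_ (subset_inter (vadd_subset_sweep hs le_rfl) ?_)
  · rintro _ ⟨hp, q, hq, rfl⟩
    obtain ⟨u₂, ⟨hu₂, -⟩, k₂, hk₂, rfl⟩ := mem_sweep.1 hq
    obtain ⟨u₁, ⟨-, hu₁⟩, k₁, hk₁, hk₁_eq⟩ := mem_sweep.1 hp
    refine vadd_mem_vadd_set ?_
    have hk₁' : k₂ + (s - u₁ + u₂) • x = k₁ := by
      simp only [vadd_eq_add] at hk₁_eq
      linear_combination (norm := module) -hk₁_eq
    rw [add_comm]
    exact hK.add_smul_mem_of_mem_Icc_s8 hk₂ (hk₁' ▸ hk₁) ⟨hu₂, by linarith⟩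
  · exact vadd_set_mono (by simpa [sweep_zero] using vadd_subset_sweep (x := x) le_rfl ht)

lemma sweep_sub_subset {a b : E} (hK : Convex ℝ K) (ha : a ∈ K) (hb : b ∈ K)
    (ht : 0 ≤ t) : sweep K (a - b) t ⊆ -(t • b) +ᵥ (1 + t) • K := by
  intro p hp
  obtain ⟨u, hu, k, hk, rfl⟩ := mem_sweep.1 hp
  have hab : t • b + u • (a - b) ∈ t • K :=
    (hK.smul t).add_smul_mem_of_mem_Icc_s8 (smul_mem_smul_set hb)
      (by simpa [smul_sub] using smul_mem_smul_set (a := t) ha) hu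
  rw [mem_vadd_set_iff_neg_vadd_mem, neg_neg, hK.add_smul zero_le_one ht, one_smul]
  exact ⟨k, hk, _, hab, by simp only [vadd_eq_add]; abel⟩

lemma convexHull_union_vadd_subset_sweep (hK : Convex ℝ K) :
    convexHull ℝ (K ∪ (x +ᵥ K)) ⊆ sweep K x 1 := by
  refine convexHull_min (union_subset ?_ ?_) (convex_sweep hK)
  · simpa using vadd_subset_sweep (K := K) (x := x) le_rfl zero_le_one
  · simpa using vadd_subset_sweep (K := K) (x := x) zero_le_one le_rfl

end Sweep

section Measure

variable {E : Type*} [NormedAddCommGroup E] [NormedSpace ℝ E] {K : Set E} {x : E} {s t : ℝ}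

lemma IsCompact.sweep (hK : IsCompact K) : IsCompact (sweep K x t) :=
  (isCompact_Icc.image (continuous_id.smul continuous_const)).add hK

variable [MeasurableSpace E] [BorelSpace E] (μ : Measure E)

lemma measure_sweep_add [μ.IsAddLeftInvariant] (hKc : IsCompact K) (hK : Convex ℝ K)
    (hs : 0 ≤ s) (ht : 0 ≤ t) :
    μ (sweep K x (s + t)) + μ K = μ (sweep K x s) + μ (sweep K x t) := by
  have hmeas : MeasurableSet (s • x +ᵥ sweep K x t) :=
    (hKc.sweep.vadd _).isClosed.measurableSet
  rw [sweep_add hs ht, ← measure_vadd μ (s • x) K, ← sweep_inter_vadd_sweep hK hs ht,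
    measure_union_add_inter _ hmeas, measure_vadd]

lemma measure_sweep_nat_mul [μ.IsAddLeftInvariant] (hKc : IsCompact K) (hK : Convex ℝ K)
    (ht : 0 ≤ t) (m : ℕ) :
    μ (sweep K x (m * t)) + m * μ K = μ K + m * μ (sweep K x t) := by
  induction m with
  | zero => simp [sweep_zero]
  | succ m ih =>
    have hstep := measure_sweep_add μ (x := x) hKc hK (by positivity : 0 ≤ (m : ℝ) * t) ht
    rw [Nat.cast_succ, Nat.cast_succ, add_one_mul (m : ℝ), add_one_mul, add_one_mul,
      add_comm _ (μ K), ← add_assoc, hstep, add_right_comm, ih, add_assoc]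

end Measure

lemma tendsto_nat_mul_one_add_inv_pow_sub_one (n : ℕ) :
    Tendsto (fun m : ℕ => (m : ℝ) * ((1 + (m : ℝ)⁻¹) ^ n - 1)) atTop (𝓝 n) := by
  have hslope := (hasDerivAt_pow n (1 : ℝ)).tendsto_slope_zero_right
  have hinv : Tendsto (fun m : ℕ => (m : ℝ)⁻¹) atTop (𝓝[>] 0) :=
    tendsto_inv_atTop_nhdsGT_zero.comp tendsto_natCast_atTop_atTop
  simpa [Function.comp_def] using hslope.comp hinv

section Haar

open Module

variable {E : Type*} [NormedAddCommGroup E] [NormedSpace ℝ E] [MeasurableSpace E] [BorelSpace E]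
  [FiniteDimensional ℝ E] (μ : Measure E) [μ.IsAddHaarMeasure] {K : Set E} {a b : E} {t : ℝ}

lemma measure_sweep_sub_le (hK : Convex ℝ K) (ha : a ∈ K) (hb : b ∈ K) (ht : 0 ≤ t) :
    μ (sweep K (a - b) t) ≤ ENNReal.ofReal ((1 + t) ^ finrank ℝ E) * μ K :=
  (measure_mono (sweep_sub_subset hK ha hb ht)).trans_eq <| by
    rw [measure_vadd, Measure.addHaar_smul_of_nonneg μ (by linarith)]

lemma measure_sweep_sub_one_le (hKc : IsCompact K) (hK : Convex ℝ K) (ha : a ∈ K) (hb : b ∈ K) :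
    (μ (sweep K (a - b) 1)).toReal ≤ (1 + finrank ℝ E) * (μ K).toReal := by
  set n := finrank ℝ E
  have hKfin : μ K ≠ ∞ := hKc.measure_ne_top
  have hsweep (t : ℝ) : μ (sweep K (a - b) t) ≠ ∞ := hKc.sweep.measure_ne_top
  have hbound : ∀ m : ℕ, 0 < m →
      (μ (sweep K (a - b) 1)).toReal ≤ (1 + m * ((1 + (m : ℝ)⁻¹) ^ n - 1)) * (μ K).toReal := by
    intro m hm
    have hsum := congrArg ENNReal.toReal
      (measure_sweep_nat_mul μ (x := a - b) hKc hK (inv_nonneg.2 m.cast_nonneg) m)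
    rw [mul_inv_cancel₀ (by positivity)] at hsum
    rw [ENNReal.toReal_add (hsweep 1) (ENNReal.mul_ne_top (ENNReal.natCast_ne_top m) hKfin),
      ENNReal.toReal_add hKfin (ENNReal.mul_ne_top (ENNReal.natCast_ne_top m) (hsweep _))] at hsum
    simp only [ENNReal.toReal_mul, ENNReal.toReal_natCast] at hsum
    have hg := ENNReal.toReal_mono (ENNReal.mul_ne_top ENNReal.ofReal_ne_top hKfin)
      (measure_sweep_sub_le μ hK ha hb (t := (m : ℝ)⁻¹) (by positivity))
    rw [ENNReal.toReal_mul, ENNReal.toReal_ofReal (by positivity)] at hg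
    nlinarith
  have hlim : Tendsto (fun m : ℕ => (1 + m * ((1 + (m : ℝ)⁻¹) ^ n - 1)) * (μ K).toReal) atTop
      (𝓝 ((1 + n) * (μ K).toReal)) :=
    ((tendsto_nat_mul_one_add_inv_pow_sub_one n).const_add 1).mul_const _
  exact ge_of_tendsto hlim ((eventually_gt_atTop 0).mono hbound)

theorem measure_convexHull_union_vadd_le (hKc : IsCompact K) (hK : Convex ℝ K) {x : E}
    (hx : (K ∩ (x +ᵥ K)).Nonempty) :
    (μ (convexHull ℝ (K ∪ (x +ᵥ K)))).toReal ≤ (1 + finrank ℝ E) * (μ K).toReal := by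
  obtain ⟨a, ha, b, hb, hba⟩ := hx
  obtain rfl : x = a - b := by rw [← hba]; exact (add_sub_cancel_right x b).symm
  calc _ ≤ (μ (sweep K (a - b) 1)).toReal :=
        ENNReal.toReal_mono hKc.sweep.measure_ne_top
          (measure_mono (convexHull_union_vadd_subset_sweep hK))
    _ ≤ _ := measure_sweep_sub_one_le μ hKc hK ha hb

end Haar

/-- Rogers–Shephard upper bound: c_tr(K) ≤ 1 + n. -/
theorem ctr_le (n : ℕ) (K : Set (EuclideanSpace ℝ (Fin n))) (hK : IsConvexBody K) :
    ctr n K ≤ 1 + n := by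
  obtain ⟨hKc, hKconv, hKint⟩ := hK
  have hpos : 0 < (volume K).toReal :=
    ENNReal.toReal_pos (Measure.measure_pos_of_nonempty_interior _ hKint).ne' hKc.measure_ne_top
  rw [ctr, div_le_iff₀ hpos]
  refine Real.sSup_le ?_ (by positivity)
  rintro _ ⟨x, hx, rfl⟩
  simpa using measure_convexHull_union_vadd_le volume hKc hKconv hx
end
end

section
/- Let B² be the closed Euclidean unit disk in the plane. The largest-area parallelogram inscribed in B² has area 2, and max over x with B² ∩ (x+B²) ≠ ∅ of λ(conv(B² ∪ (x+B²))) = π + 4; consequently the ratio of the maximal convex-hull area of two intersecting translates of the disk to the area of the disk is 1 + 4/π. -/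
open MeasureTheory Set Pointwise ENNReal

noncomputable section

/-!
The convex hull of `B ∪ (x + B)` for the unit disk `B` is the stadium `[0, x] + B`. A reflection
moves `x` onto a coordinate axis, where Fubini slices the stadium into chords of length
`‖x‖ + 2√(1 - y²)`, so its area is `π + 2‖x‖`; the translates meet iff `‖x‖ ≤ 2`.
A parallelogram `c + s u + t v` (`|s|, |t| ≤ 1`) inscribed in the disk has diagonals `2(u + v)` and
`2(u - v)` of length at most `2`, and its area is `4 |det(u, v)| = 2 |det(u + v, u - v)| ≤ 2`,
with equality for the inscribed square.
-/

theorem convexHull_union_vadd_eq_segment_add {E : Type*} [AddCommGroup E] [Module ℝ E]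
    {s : Set E} (hs : Convex ℝ s) (x : E) :
    convexHull ℝ (s ∪ (x +ᵥ s)) = segment ℝ 0 x + s := by
  have hpair : ({0, x} : Set E) + s = s ∪ (x +ᵥ s) := by
    ext p
    simp [mem_add, mem_vadd_set, or_comm, eq_comm]
  rw [← hpair, convexHull_add, convexHull_pair, hs.convexHull_eq]

theorem volume_segment_add_closedBall_eq_of_norm_eq {E : Type*} [NormedAddCommGroup E]
    [InnerProductSpace ℝ E] [FiniteDimensional ℝ E] [MeasurableSpace E] [BorelSpace E]
    {x y : E} (h : ‖x‖ = ‖y‖) (r : ℝ) :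
    volume (segment ℝ 0 x + Metric.closedBall (0 : E) r) =
      volume (segment ℝ 0 y + Metric.closedBall (0 : E) r) := by
  set e := Submodule.reflection (ℝ ∙ (x - y))ᗮ
  have hsegment : e '' segment ℝ 0 x = segment ℝ 0 y := by
    simpa [e, Submodule.reflection_sub h] using
      image_segment ℝ e.toLinearEquiv.toLinearMap.toAffineMap 0 x
  have himage : e '' (segment ℝ 0 x + Metric.closedBall 0 r) =
      segment ℝ 0 y + Metric.closedBall 0 r := by
    rw [image_add, hsegment, e.image_closedBall, map_zero]
  rw [← himage, e.image_eq_preimage_symm]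
  exact (e.symm.measurePreserving.measure_preimage_emb
    e.symm.toHomeomorph.measurableEmbedding _).symm

theorem volume_region_between_cc_eq_volume_regionBetween {α : Type*} [MeasurableSpace α]
    {μ : Measure α} {f g : α → ℝ} {s : Set α} (hf : Measurable f) (hg : Measurable g)
    (hs : MeasurableSet s) :
    μ.prod volume {p : α × ℝ | p.1 ∈ s ∧ p.2 ∈ Icc (f p.1) (g p.1)} =
      μ.prod volume (regionBetween f g s) := by
  rw [Measure.prod_apply (measurableSet_region_between_cc hf hg hs),
    Measure.prod_apply (measurableSet_regionBetween hf hg hs)]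
  refine lintegral_congr fun x => ?_
  by_cases hx : x ∈ s
  · simp only [regionBetween, preimage_ofPred_eq, hx, true_and]
    exact Real.volume_Icc.trans Real.volume_Ioo.symm
  · simp [regionBetween, hx]

theorem segment_zero_smul_eq_image {E : Type*} [AddCommGroup E] [Module ℝ E] {r : ℝ}
    (hr : 0 ≤ r) (v : E) : segment ℝ 0 (r • v) = (· • v) '' Icc 0 r := by
  rw [← segment_eq_Icc hr]
  simpa using (image_segment ℝ (LinearMap.toSpanSingleton ℝ E v).toAffineMap 0 r).symm

theorem norm_le_of_norm_add_le_of_norm_sub_le {E : Type*} [NormedAddCommGroup E]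
    [NormedSpace ℝ E] {c w : E} {r : ℝ} (h₁ : ‖c + w‖ ≤ r) (h₂ : ‖c - w‖ ≤ r) : ‖w‖ ≤ r := by
  have h : ‖(2 : ℝ) • w‖ ≤ 2 * r :=
    calc ‖(2 : ℝ) • w‖ = ‖(c + w) - (c - w)‖ := by congr 1; module
      _ ≤ ‖c + w‖ + ‖c - w‖ := norm_sub_le _ _
      _ ≤ 2 * r := by linarith
  rw [norm_smul, Real.norm_two] at h
  linarith

theorem sq_add_sq_le_one_iff {a b : ℝ} :
    a ^ 2 + b ^ 2 ≤ 1 ↔ a ∈ Icc (-1) 1 ∧ |b| ≤ √(1 - a ^ 2) := by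
  rw [mem_Icc, ← abs_le, ← sq_le_one_iff_abs_le_one]
  constructor
  · intro h
    exact ⟨by nlinarith [sq_nonneg b], Real.abs_le_sqrt (by linarith)⟩
  · rintro ⟨ha, hb⟩
    rw [Real.le_sqrt (abs_nonneg b) (by linarith), sq_abs] at hb
    linarith

theorem exists_mem_Icc_abs_sub_le_iff {r w t : ℝ} (hr : 0 ≤ r) (hw : 0 ≤ w) :
    (∃ s ∈ Icc 0 r, |t - s| ≤ w) ↔ t ∈ Icc (-w) (r + w) := by
  rw [← zero_sub, sub_eq_add_neg, ← Icc_add_Icc hr (neg_le_self hw), mem_add]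
  refine exists_congr fun s => and_congr_right fun _ => ⟨fun h => ⟨t - s, ?_, by ring⟩, ?_⟩
  · rwa [mem_Icc, ← abs_le]
  · rintro ⟨u, hu, rfl⟩
    rwa [add_sub_cancel_left, abs_le]

theorem norm_sq_plane_eq (p : Plane) : ‖p‖ ^ 2 = p 0 ^ 2 + p 1 ^ 2 := by
  simp [EuclideanSpace.real_norm_sq_eq, Fin.sum_univ_two]

theorem abs_cross_le_norm_mul_norm (a b : Plane) : |a 0 * b 1 - a 1 * b 0| ≤ ‖a‖ * ‖b‖ := by
  refine abs_le_of_sq_le_sq ?_ (by positivity)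
  rw [mul_pow, norm_sq_plane_eq, norm_sq_plane_eq]
  nlinarith [sq_nonneg (a 0 * b 0 + a 1 * b 1)]

def planeCoords : Plane ≃ᵐ ℝ × ℝ :=
  (MeasurableEquiv.toLp 2 (Fin 2 → ℝ)).symm.trans MeasurableEquiv.finTwoArrow

theorem measurePreserving_planeCoords : MeasurePreserving planeCoords :=
  (volume_preserving_finTwoArrow ℝ).comp
    (EuclideanSpace.volume_preserving_symm_measurableEquiv_toLp (Fin 2))

def parallelogramMap (u v : Plane) : Plane →ₗ[ℝ] Plane where
  toFun p := p 0 • u + p 1 • v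
  map_add' p q := by simp only [PiLp.add_apply, add_smul]; abel
  map_smul' a p := by
    simp only [PiLp.smul_apply, smul_eq_mul, RingHom.id_apply, smul_add, mul_smul]

theorem det_parallelogramMap (u v : Plane) :
    LinearMap.det (parallelogramMap u v) = u 0 * v 1 - u 1 * v 0 := by
  rw [← LinearMap.det_toMatrix (PiLp.basisFun 2 ℝ (Fin 2)), Matrix.det_fin_two]
  simp only [parallelogramMap, LinearMap.toMatrix_apply, PiLp.basisFun_apply, LinearMap.coe_mk,
    AddHom.coe_mk, PiLp.single_eq_same, one_smul, ne_eq, one_ne_zero, not_false_eq_true,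
    PiLp.single_eq_of_ne, zero_smul, add_zero, PiLp.basisFun_repr, zero_ne_one, zero_add]
  ring

theorem area_parallelogram_s10 (c u v : Plane) :
    area ((fun st : ℝ × ℝ => c + st.1 • u + st.2 • v) '' (Icc (-1) 1 ×ˢ Icc (-1) 1)) =
      4 * |u 0 * v 1 - u 1 * v 0| := by
  have hcomp : (fun st : ℝ × ℝ => c + st.1 • u + st.2 • v) =
      (c +ᵥ ·) ∘ parallelogramMap u v ∘ planeCoords.symm := by
    funext st
    simp [parallelogramMap, planeCoords, add_assoc]
  rw [area, hcomp, image_comp, image_comp, MeasurableEquiv.image_symm, image_vadd, measure_vadd,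
    Measure.addHaar_image_linearMap, det_parallelogramMap,
    measurePreserving_planeCoords.measure_preimage_equiv, Measure.volume_eq_prod,
    Measure.prod_prod, Real.volume_Icc, ← ENNReal.ofReal_mul (by norm_num),
    ← ENNReal.ofReal_mul (abs_nonneg _), ENNReal.toReal_ofReal (by positivity)]
  norm_num [mul_comm]

theorem abs_det_le_half_of_image_subset_closedBall {c u v : Plane}
    (h : (fun st : ℝ × ℝ => c + st.1 • u + st.2 • v) '' (Icc (-1) 1 ×ˢ Icc (-1) 1) ⊆
      Metric.closedBall 0 1) :
    |u 0 * v 1 - u 1 * v 0| ≤ 1 / 2 := by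
  have hvertex (s t : ℝ) (hs : s ∈ Icc (-1) 1) (ht : t ∈ Icc (-1) 1) :
      ‖c + s • u + t • v‖ ≤ 1 :=
    mem_closedBall_zero_iff.1 (h ⟨(s, t), ⟨hs, ht⟩, rfl⟩)
  have hone : (1 : ℝ) ∈ Icc (-1) 1 := by norm_num
  have hneg : (-1 : ℝ) ∈ Icc (-1) 1 := by norm_num
  have hsum : ‖u + v‖ ≤ 1 := norm_le_of_norm_add_le_of_norm_sub_le (c := c)
    (by rw [show c + (u + v) = c + (1 : ℝ) • u + (1 : ℝ) • v by module]
        exact hvertex 1 1 hone hone)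
    (by rw [show c - (u + v) = c + (-1 : ℝ) • u + (-1 : ℝ) • v by module]
        exact hvertex (-1) (-1) hneg hneg)
  have hdiff : ‖u - v‖ ≤ 1 := norm_le_of_norm_add_le_of_norm_sub_le (c := c)
    (by rw [show c + (u - v) = c + (1 : ℝ) • u + (-1 : ℝ) • v by module]
        exact hvertex 1 (-1) hone hneg)
    (by rw [show c - (u - v) = c + (-1 : ℝ) • u + (1 : ℝ) • v by module]
        exact hvertex (-1) 1 hneg hone)
  have hcross := abs_cross_le_norm_mul_norm (u + v) (u - v)
  have hdet : (u + v) 0 * (u - v) 1 - (u + v) 1 * (u - v) 0 = -2 * (u 0 * v 1 - u 1 * v 0) := by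
    simp only [PiLp.add_apply, PiLp.sub_apply]
    ring
  rw [hdet, abs_mul, abs_neg, abs_two] at hcross
  nlinarith [norm_nonneg (u + v), norm_nonneg (u - v)]

theorem area_le_two_of_isParallelogram_subset_closedBall {Q : Set Plane} (hQ : IsParallelogram Q)
    (hQB : Q ⊆ Metric.closedBall 0 1) : area Q ≤ 2 := by
  obtain ⟨c, u, v, rfl⟩ := hQ
  rw [area_parallelogram_s10]
  linarith [abs_det_le_half_of_image_subset_closedBall hQB]

theorem exists_isParallelogram_subset_closedBall_area_eq_two :
    ∃ P : Set Plane, IsParallelogram P ∧ P ⊆ Metric.closedBall 0 1 ∧ area P = 2 := by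
  refine ⟨_, ⟨0, !₂[1 / 2, 1 / 2], !₂[-1 / 2, 1 / 2], rfl⟩, ?_, ?_⟩
  · rintro _ ⟨⟨s, t⟩, ⟨⟨hs₁, hs₂⟩, ⟨ht₁, ht₂⟩⟩, rfl⟩
    rw [mem_closedBall_zero_iff, ← sq_le_one_iff₀ (norm_nonneg _), norm_sq_plane_eq]
    simp only [zero_add, PiLp.add_apply, PiLp.smul_apply, smul_eq_mul, Matrix.cons_val_zero,
      Matrix.cons_val_one, Matrix.cons_val_fin_one]
    nlinarith
  · rw [area_parallelogram_s10]
    norm_num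

theorem mem_segment_smul_single_add_closedBall {r : ℝ} (hr : 0 ≤ r) {p : Plane} :
    p ∈ segment ℝ 0 (r • EuclideanSpace.single 1 1 : Plane) + Metric.closedBall 0 1 ↔
      p 0 ∈ Icc (-1) 1 ∧ p 1 ∈ Icc (-√(1 - p 0 ^ 2)) (r + √(1 - p 0 ^ 2)) := by
  have hsq (s : ℝ) : ‖p - s • EuclideanSpace.single 1 1‖ ≤ 1 ↔
      p 0 ∈ Icc (-1) 1 ∧ |p 1 - s| ≤ √(1 - p 0 ^ 2) := by
    rw [← sq_le_one_iff₀ (norm_nonneg _), norm_sq_plane_eq, ← sq_add_sq_le_one_iff]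
    simp
  simp only [segment_zero_smul_eq_image hr, mem_add, exists_mem_image, mem_closedBall_zero_iff,
    ← eq_sub_iff_add_eq', exists_eq_right, hsq]
  rw [← exists_mem_Icc_abs_sub_le_iff hr (Real.sqrt_nonneg _)]
  exact ⟨fun ⟨s, hs, h₀, h₁⟩ => ⟨h₀, s, hs, h₁⟩, fun ⟨h₀, s, hs, h₁⟩ => ⟨s, hs, h₀, h₁⟩⟩

theorem volume_segment_smul_single_add_closedBall {r : ℝ} (hr : 0 ≤ r) :
    volume (segment ℝ 0 (r • EuclideanSpace.single 1 1 : Plane) + Metric.closedBall 0 1) =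
      ENNReal.ofReal (Real.pi + 2 * r) := by
  set f : ℝ → ℝ := fun y => -√(1 - y ^ 2)
  set g : ℝ → ℝ := fun y => r + √(1 - y ^ 2)
  have hf : Continuous f := by fun_prop
  have hg : Continuous g := by fun_prop
  have hS : segment ℝ 0 (r • EuclideanSpace.single 1 1 : Plane) + Metric.closedBall 0 1 =
      planeCoords ⁻¹' {q : ℝ × ℝ | q.1 ∈ Icc (-1) 1 ∧ q.2 ∈ Icc (f q.1) (g q.1)} := by
    ext p
    exact mem_segment_smul_single_add_closedBall hr
  rw [hS, measurePreserving_planeCoords.measure_preimage_equiv, Measure.volume_eq_prod,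
    volume_region_between_cc_eq_volume_regionBetween hf.measurable hg.measurable measurableSet_Icc,
    volume_regionBetween_eq_integral hf.integrableOn_Icc hg.integrableOn_Icc measurableSet_Icc
      fun y _ => by linarith [Real.sqrt_nonneg (1 - y ^ 2)]]
  congr 1
  rw [integral_Icc_eq_integral_Ioc, ← intervalIntegral.integral_of_le (by norm_num)]
  simp only [Pi.sub_apply, f, g, sub_neg_eq_add, add_assoc, ← two_mul]
  have hchord : Continuous fun y : ℝ => 2 * √(1 - y ^ 2) := by fun_prop
  rw [intervalIntegral.integral_add intervalIntegrable_const (hchord.intervalIntegrable _ _),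
    intervalIntegral.integral_const, intervalIntegral.integral_const_mul, integral_sqrt_one_sub_sq]
  norm_num
  ring

theorem area_convexHull_closedBall_union_vadd (x : Plane) :
    area (convexHull ℝ (Metric.closedBall 0 1 ∪ (x +ᵥ Metric.closedBall (0 : Plane) 1))) =
      Real.pi + 2 * ‖x‖ := by
  rw [area, convexHull_union_vadd_eq_segment_add (convex_closedBall 0 1),
    volume_segment_add_closedBall_eq_of_norm_eq (y := ‖x‖ • EuclideanSpace.single 1 1) (by simp [norm_smul]),
    volume_segment_smul_single_add_closedBall (norm_nonneg x),
    ENNReal.toReal_ofReal (by positivity)]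

theorem sSup_area_convexHull_closedBall_union_vadd :
    sSup {A : ℝ | ∃ x : Plane,
        (Metric.closedBall (0 : Plane) 1 ∩ (x +ᵥ Metric.closedBall (0 : Plane) 1)).Nonempty ∧
        A = area (convexHull ℝ (Metric.closedBall 0 1 ∪ (x +ᵥ Metric.closedBall (0 : Plane) 1)))} =
      Real.pi + 4 := by
  refine IsGreatest.csSup_eq ⟨⟨(2 : ℝ) • EuclideanSpace.single 1 1, ?_, ?_⟩, ?_⟩
  · refine ⟨EuclideanSpace.single 1 1, ?_, ?_⟩
    · simp
    · rw [Metric.vadd_closedBall, vadd_eq_add, add_zero, Metric.mem_closedBall, dist_eq_norm,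
        show EuclideanSpace.single 1 1 - (2 : ℝ) • EuclideanSpace.single 1 1 =
          (-1 : ℝ) • (EuclideanSpace.single 1 1 : Plane) by module]
      simp
  · rw [area_convexHull_closedBall_union_vadd, norm_smul]
    norm_num
  · rintro A ⟨x, hmeet, rfl⟩
    rw [Metric.vadd_closedBall, vadd_eq_add, add_zero] at hmeet
    have hx : ‖x‖ ≤ 2 := by
      simpa [dist_eq_norm, one_add_one_eq_two] using
        Metric.dist_le_add_of_nonempty_closedBall_inter_closedBall hmeet
    rw [area_convexHull_closedBall_union_vadd]
    linarith

/-- For the closed unit disk B²: the largest inscribed parallelogram has area 2, the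
maximal area of the convex hull of two intersecting translates is π + 4, and the ratio
of this maximum to the area of the disk is 1 + 4/π. -/
theorem unit_disk_translates :
    (∀ Q : Set Plane, IsParallelogram Q → Q ⊆ Metric.closedBall 0 1 → area Q ≤ 2) ∧
    (∃ P : Set Plane, IsParallelogram P ∧ P ⊆ Metric.closedBall 0 1 ∧ area P = 2) ∧
    sSup {A : ℝ | ∃ x : Plane, (Metric.closedBall (0:Plane) 1 ∩ (x +ᵥ Metric.closedBall (0:Plane) 1)).Nonempty ∧
        A = area (convexHull ℝ (Metric.closedBall 0 1 ∪ (x +ᵥ Metric.closedBall (0:Plane) 1)))} =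
      Real.pi + 4 ∧
    sSup {A : ℝ | ∃ x : Plane, (Metric.closedBall (0:Plane) 1 ∩ (x +ᵥ Metric.closedBall (0:Plane) 1)).Nonempty ∧
        A = area (convexHull ℝ (Metric.closedBall 0 1 ∪ (x +ᵥ Metric.closedBall (0:Plane) 1)))} /
      area (Metric.closedBall 0 1) = 1 + 4 / Real.pi := by
  refine ⟨fun Q => area_le_two_of_isParallelogram_subset_closedBall,
    exists_isParallelogram_subset_closedBall_area_eq_two,
    sSup_area_convexHull_closedBall_union_vadd, ?_⟩
  rw [sSup_area_convexHull_closedBall_union_vadd]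
  have hdisk : area (Metric.closedBall (0 : Plane) 1) = Real.pi := by
    simp [area, Real.pi_pos.le]
  rw [hdisk]
  field_simp
end
end
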